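/- arXiv:2103.04457 — 3 statements merged into one kernel-verified Lean document; each statement's English description precedes it below -/
import Mathlib

section
/- For every n ≥ 2, let G = DihedralGroup (2^(n-1)) be the dihedral group of order 2^n, let H = Subgroup.zpowers (r 2) and K = Subgroup.zpowers (sr 0). Then the set of double cosets H\G/K has exactly two elements, i.e. Nat.card (Doset.Quotient (H : Set G) (K : Set G)) = 2. -/
/-!
Since `H = ⟨r 2⟩` is normal, `H g K = g (H ⊔ K)`, so the double cosets are the left cosets of
`H ⊔ K`. For even `m`, this subgroup is the kernel of the surjection `D_m → ℤ/2` sending `r i`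
and `sr i` to `i mod 2`, hence has index two.
-/

open DihedralGroup

namespace DoubleCoset

variable {G : Type*} [Group G]

theorem setoid_eq_leftRel_sup_of_normal (H K : Subgroup G) [H.Normal] :
    setoid (H : Set G) K = QuotientGroup.leftRel (H ⊔ K) := by
  ext a b
  rw [rel_iff, QuotientGroup.leftRel_apply, ← SetLike.mem_coe, Subgroup.normal_mul,
    Set.mem_mul]
  constructor
  · rintro ⟨h, hh, k, hk, rfl⟩
    exact ⟨a⁻¹ * h * a, Subgroup.Normal.conj_mem' ‹_› h hh a, k, hk, by group⟩
  · rintro ⟨h, hh, k, hk, hab⟩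
    refine ⟨a * h * a⁻¹, Subgroup.Normal.conj_mem ‹_› h hh a, k, hk, ?_⟩
    rw [← mul_inv_cancel_left a b, ← hab]
    group

theorem card_quotient_of_normal (H K : Subgroup G) [H.Normal] :
    Nat.card (Quotient (H : Set G) K) = (H ⊔ K).index :=
  Nat.card_congr (Quotient.congrRight fun a b => by
    rw [setoid_eq_leftRel_sup_of_normal])

end DoubleCoset

namespace ZMod

theorem exists_eq_two_mul_of_castHom_eq_zero {m : ℕ} (hm : 2 ∣ m) {i : ZMod m}
    (hi : castHom hm (ZMod 2) i = 0) : ∃ c : ℤ, i = 2 * c := by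
  obtain ⟨z, rfl⟩ := intCast_surjective i
  rw [map_intCast, intCast_zmod_eq_zero_iff_dvd] at hi
  obtain ⟨c, rfl⟩ := hi
  exact ⟨c, by push_cast; rfl⟩

end ZMod

namespace DihedralGroup

variable {m : ℕ}

instance normal_zpowers_r (i : ZMod m) : (Subgroup.zpowers (r i)).Normal where
  conj_mem := by
    rintro _ ⟨k, rfl⟩ (g | g)
    · exact ⟨k, by simp [r_zpow, r_mul_r, inv_r]⟩
    · exact ⟨-k, by simp [r_zpow, sr_mul_sr, inv_sr]⟩

def indexParity (hm : 2 ∣ m) : DihedralGroup m →* Multiplicative (ZMod 2) where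
  toFun
    | r i => .ofAdd (ZMod.castHom hm (ZMod 2) i)
    | sr i => .ofAdd (ZMod.castHom hm (ZMod 2) i)
  map_one' := congrArg Multiplicative.ofAdd (map_zero _)
  map_mul' := by
    rintro (i | i) (j | j) <;>
      simp only [r_mul_r, r_mul_sr, sr_mul_r, sr_mul_sr, ← ofAdd_add, map_add, map_sub,
        CharTwo.sub_eq_add, add_comm]

theorem indexParity_surjective (hm : 2 ∣ m) : Function.Surjective (indexParity hm) := by
  intro x
  obtain ⟨z, hz⟩ := ZMod.intCast_surjective x.toAdd
  refine ⟨r z, ?_⟩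
  change Multiplicative.ofAdd (ZMod.castHom hm (ZMod 2) (z : ZMod m)) = x
  rw [map_intCast, hz]
  rfl

theorem ker_indexParity (hm : 2 ∣ m) :
    (indexParity hm).ker = Subgroup.zpowers (r 2) ⊔ Subgroup.zpowers (sr 0) := by
  apply le_antisymm
  · rintro (i | i) hi
    all_goals
      obtain ⟨c, rfl⟩ := ZMod.exists_eq_two_mul_of_castHom_eq_zero hm hi
    · exact Subgroup.mem_sup_left ⟨c, r_zpow 2 c⟩
    · have hsr : sr (2 * c : ZMod m) = r 2 ^ (-c) * sr 0 := by simp [r_zpow, r_mul_sr]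
      rw [hsr]
      exact Subgroup.mul_mem_sup (Subgroup.zpow_mem_zpowers _ _) (Subgroup.mem_zpowers _)
  · rw [sup_le_iff, Subgroup.zpowers_le, Subgroup.zpowers_le]
    exact ⟨congrArg Multiplicative.ofAdd ((map_ofNat _ 2).trans (by decide)),
      congrArg Multiplicative.ofAdd (map_zero _)⟩

end DihedralGroup

theorem dihedral_double_coset_card (n : ℕ) (hn : 2 ≤ n) :
    Nat.card (DoubleCoset.Quotient
      ((Subgroup.zpowers (r (2 : ZMod (2 ^ (n - 1))))) : Set (DihedralGroup (2 ^ (n - 1))))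
      ((Subgroup.zpowers (sr (0 : ZMod (2 ^ (n - 1))))) : Set (DihedralGroup (2 ^ (n - 1))))) = 2 := by
  have hm : 2 ∣ 2 ^ (n - 1) := dvd_pow_self 2 (by omega)
  rw [DoubleCoset.card_quotient_of_normal, ← ker_indexParity hm, Subgroup.index_ker,
    MonoidHom.range_eq_top.mpr (indexParity_surjective hm), Subgroup.card_top,
    Nat.card_eq_fintype_card, Fintype.card_multiplicative, ZMod.card]
end

section
/- Let k = ZMod 2, let B = MvPolynomial (Fin 3) k with variables x₀, x₁, x₂, let I ⊆ B be the ideal generated by x₀·x₁ + x₀·x₂ + x₁·x₂, and let R = B ⧸ I. Let A = MvPolynomial (Fin 2) k with variables y₀, y₁, and let φ : A →ₐ[k] R be the k-algebra homomorphism sending y₀ to the class of x₀ + x₂ and y₁ to the class of x₁ + x₂; regard R as an A-module via φ. Then R is a free A-module of rank 2 with basis (1, class of x₀), i.e. there is an A-module basis of R indexed by Fin 2 whose first element is 1 and whose second element is the residue class of x₀. (This is the claim that F₂[u_{σ₁},u_{σ₂},u_{σ'}]/(u_{σ₁}u_{σ₂}+u_{σ₁}u_{σ'}+u_{σ₂}u_{σ'})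 is freely generated in degrees 0 and 1 as a module over F₂[u_{σ₁}+u_{σ'}, u_{σ₂}+u_{σ'}].) -/
/-!
STATEMENT 8: Over `k = ZMod 2`, the ring
`R = k[x₀,x₁,x₂]/(x₀x₁ + x₀x₂ + x₁x₂)` is a free module of rank 2, with basis
`(1, x₀)`, over the polynomial ring `A = k[y₀,y₁]` acting through the algebra
map `y₀ ↦ x₀ + x₂`, `y₁ ↦ x₁ + x₂`.
-/

open MvPolynomial

noncomputable section

/-- The quotient ring `R = F₂[x₀,x₁,x₂]/(x₀x₁ + x₀x₂ + x₁x₂)`. -/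
abbrev Rquot : Type :=
  MvPolynomial (Fin 3) (ZMod 2) ⧸
    (Ideal.span {(X 0 * X 1 + X 0 * X 2 + X 1 * X 2 : MvPolynomial (Fin 3) (ZMod 2))})

/-- The quotient map `F₂[x₀,x₁,x₂] → R`. -/
def qmk : MvPolynomial (Fin 3) (ZMod 2) →+* Rquot :=
  Ideal.Quotient.mk _

/-- The algebra map `φ : F₂[y₀,y₁] → R` sending `y₀ ↦ x₀ + x₂` and `y₁ ↦ x₁ + x₂`. -/
def phi : MvPolynomial (Fin 2) (ZMod 2) →ₐ[ZMod 2] Rquot :=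
  aeval ![qmk (X 0 + X 2), qmk (X 1 + X 2)]

-- `R` as a module over `A = F₂[y₀,y₁]` by restriction of scalars along `φ`.
set_option synthInstance.maxHeartbeats 1000000 in
instance : Module (MvPolynomial (Fin 2) (ZMod 2)) Rquot :=
  Module.compHom Rquot phi.toRingHom

/-!
Put `y₀ = x₀ + x₂` and `y₁ = x₁ + x₂`. Then `x₂ = x₀ + y₀` and `x₁ = x₀ + y₀ + y₁`, so `R` is
generated over `A = F₂[y₀,y₁]` by `x₀`, and in characteristic 2 the defining relation becomes
`x₀² = y₀ (y₀ + y₁)`. Hence `R ≅ A[t]/(t² + y₀ (y₀ + y₁))` as `A`-modules, with `t ↦ x₀`, and the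
quotient of `A[t]` by a monic quadratic is free with basis `1, t`.
-/

open scoped Polynomial

local notation "A" => MvPolynomial (Fin 2) (ZMod 2)

theorem Polynomial.Monic.exists_basis_eq_root_pow {R S : Type*} [CommRing R] [AddCommMonoid S]
    [Module R S] {g : R[X]} (hg : g.Monic) {n : ℕ} (hn : g.natDegree = n)
    (e : AdjoinRoot g ≃ₗ[R] S) :
    ∃ b : Module.Basis (Fin n) R S, ∀ i, b i = e (AdjoinRoot.root g ^ (i : ℕ)) := by
  refine ⟨((AdjoinRoot.powerBasis' hg).basis.reindex (finCongr hn)).map e, fun i => ?_⟩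
  simp only [Module.Basis.map_apply, Module.Basis.coe_reindex, PowerBasis.coe_basis,
    AdjoinRoot.powerBasis'_gen, Function.comp_apply]
  rfl

theorem ofNat_eq_zero_of_algebra_zmod (n : ℕ) [n.AtLeastTwo] (S : Type*) [Semiring S]
    [Algebra (ZMod n) S] : (OfNat.ofNat n : S) = 0 := by
  rw [← map_ofNat (algebraMap (ZMod n) S) n, ← Nat.cast_ofNat, ZMod.natCast_self, map_zero]

/-- `x₀` is a root in `R` because `(x₀ + x₂)(x₀ + x₁) = x₀² + (x₀x₁ + x₀x₂ + x₁x₂)`. -/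
def x₀Poly : A[X] := .X ^ 2 + .C (X 0 * (X 0 + X 1))

theorem eval₂_x₀Poly {S : Type*} [CommRing S] (f : A →+* S) (x : S) :
    x₀Poly.eval₂ f x = x ^ 2 + f (X 0 * (X 0 + X 1)) := by
  simp only [x₀Poly, Polynomial.eval₂_add, Polynomial.eval₂_X_pow, Polynomial.eval₂_C]

theorem x₀Poly_monic : x₀Poly.Monic := Polynomial.monic_X_pow_add_C _ two_ne_zero

theorem x₀Poly_natDegree : x₀Poly.natDegree = 2 := Polynomial.natDegree_X_pow_add_C

theorem qmk_relation : qmk (X 0 * X 1 + X 0 * X 2 + X 1 * X 2) = 0 :=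
  Ideal.Quotient.eq_zero_iff_mem.mpr (Ideal.subset_span rfl)

theorem phi_X_zero : phi (X 0) = qmk (X 0) + qmk (X 2) := by
  simp [phi]

theorem phi_X_one : phi (X 1) = qmk (X 1) + qmk (X 2) := by
  simp [phi]

theorem eval₂_x₀Poly_qmk_X_zero : x₀Poly.eval₂ phi.toRingHom (qmk (X 0)) = 0 := by
  have h := qmk_relation
  simp only [map_mul, map_add] at h
  rw [eval₂_x₀Poly]
  simp only [AlgHom.toRingHom_eq_coe, RingHom.coe_coe, map_mul, map_add, phi_X_zero, phi_X_one]
  linear_combination h + (qmk (X 0) ^ 2 + qmk (X 0) * qmk (X 2) + qmk (X 2) ^ 2) *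
    ofNat_eq_zero_of_algebra_zmod 2 Rquot

def adjoinRootToQuot : AdjoinRoot x₀Poly →+* Rquot :=
  AdjoinRoot.lift phi.toRingHom (qmk (X 0)) eval₂_x₀Poly_qmk_X_zero

theorem adjoinRootToQuot_of (a : A) : adjoinRootToQuot (AdjoinRoot.of x₀Poly a) = phi a :=
  AdjoinRoot.lift_of _

theorem adjoinRootToQuot_root : adjoinRootToQuot (AdjoinRoot.root x₀Poly) = qmk (X 0) :=
  AdjoinRoot.lift_root _

theorem root_x₀Poly_sq : AdjoinRoot.root x₀Poly ^ 2 =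
    AdjoinRoot.of x₀Poly (X 0) * (AdjoinRoot.of x₀Poly (X 0) + AdjoinRoot.of x₀Poly (X 1)) := by
  have h := AdjoinRoot.eval₂_root x₀Poly
  rw [eval₂_x₀Poly, map_mul, map_add] at h
  linear_combination h - AdjoinRoot.of x₀Poly (X 0) *
    (AdjoinRoot.of x₀Poly (X 0) + AdjoinRoot.of x₀Poly (X 1)) *
    ofNat_eq_zero_of_algebra_zmod 2 (AdjoinRoot x₀Poly)

def polyToAdjoinRoot : MvPolynomial (Fin 3) (ZMod 2) →ₐ[ZMod 2] AdjoinRoot x₀Poly :=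
  aeval ![AdjoinRoot.root x₀Poly, AdjoinRoot.root x₀Poly + AdjoinRoot.of x₀Poly (X 0 + X 1),
    AdjoinRoot.root x₀Poly + AdjoinRoot.of x₀Poly (X 0)]

theorem polyToAdjoinRoot_relation : polyToAdjoinRoot (X 0 * X 1 + X 0 * X 2 + X 1 * X 2) = 0 := by
  simp only [polyToAdjoinRoot, map_add, map_mul, aeval_X, Matrix.cons_val_zero,
    Matrix.cons_val_one, Matrix.cons_val_two, Matrix.head_cons, Matrix.tail_cons]
  set t := AdjoinRoot.root x₀Poly
  set a := AdjoinRoot.of x₀Poly (X 0)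
  set b := AdjoinRoot.of x₀Poly (X 1)
  linear_combination root_x₀Poly_sq + (t ^ 2 + 2 * t * a + t * b + a ^ 2 + a * b) *
    ofNat_eq_zero_of_algebra_zmod 2 (AdjoinRoot x₀Poly)

def quotToAdjoinRoot : Rquot →+* AdjoinRoot x₀Poly :=
  Ideal.Quotient.lift _ polyToAdjoinRoot.toRingHom fun p hp => by
    obtain ⟨r, rfl⟩ := Ideal.mem_span_singleton'.mp hp
    simp [polyToAdjoinRoot_relation]

theorem quotToAdjoinRoot_qmk (p : MvPolynomial (Fin 3) (ZMod 2)) :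
    quotToAdjoinRoot (qmk p) = polyToAdjoinRoot p :=
  rfl

theorem adjoinRootToQuot_comp_quotToAdjoinRoot :
    adjoinRootToQuot.comp quotToAdjoinRoot = RingHom.id Rquot := by
  have two := ofNat_eq_zero_of_algebra_zmod 2 Rquot
  refine Ideal.Quotient.ringHom_ext
    (MvPolynomial.ringHom_ext' (RingHom.ext_zmod _ _) fun i => ?_)
  change adjoinRootToQuot (quotToAdjoinRoot (qmk (X i))) = qmk (X i)
  fin_cases i <;> simp [quotToAdjoinRoot_qmk, polyToAdjoinRoot, adjoinRootToQuot_root,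
    adjoinRootToQuot_of, phi_X_zero, phi_X_one]
  · linear_combination (qmk (X 0) + qmk (X 2)) * two
  · linear_combination qmk (X 0) * two

theorem quotToAdjoinRoot_comp_adjoinRootToQuot :
    quotToAdjoinRoot.comp adjoinRootToQuot = RingHom.id (AdjoinRoot x₀Poly) := by
  have two := ofNat_eq_zero_of_algebra_zmod 2 (AdjoinRoot x₀Poly)
  refine AdjoinRoot.ringHom_ext
    (MvPolynomial.ringHom_ext' (RingHom.ext_zmod _ _) fun i => ?_) ?_
  · change quotToAdjoinRoot (adjoinRootToQuot (AdjoinRoot.of x₀Poly (X i))) =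
      AdjoinRoot.of x₀Poly (X i)
    fin_cases i <;> simp [adjoinRootToQuot_of, phi_X_zero, phi_X_one, quotToAdjoinRoot_qmk,
      polyToAdjoinRoot]
    · linear_combination AdjoinRoot.root x₀Poly * two
    · linear_combination (AdjoinRoot.root x₀Poly + AdjoinRoot.of x₀Poly (X 0)) * two
  · simp [adjoinRootToQuot_root, quotToAdjoinRoot_qmk, polyToAdjoinRoot]

def adjoinRootLinearEquiv : AdjoinRoot x₀Poly ≃ₗ[A] Rquot where
  __ := RingEquiv.ofRingHom adjoinRootToQuot quotToAdjoinRoot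
    adjoinRootToQuot_comp_quotToAdjoinRoot quotToAdjoinRoot_comp_adjoinRootToQuot
  map_smul' a x := by
    change adjoinRootToQuot (a • x) = phi a * adjoinRootToQuot x
    rw [Algebra.smul_def, map_mul, AdjoinRoot.algebraMap_eq, adjoinRootToQuot_of]

theorem adjoinRootLinearEquiv_apply (x : AdjoinRoot x₀Poly) :
    adjoinRootLinearEquiv x = adjoinRootToQuot x :=
  rfl

theorem quotient_free_of_rank_two_over_subalgebra :
    ∃ b : Module.Basis (Fin 2) (MvPolynomial (Fin 2) (ZMod 2)) Rquot,
      b 0 = 1 ∧ b 1 = qmk (X 0) := by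
  obtain ⟨b, hb⟩ :=
    x₀Poly_monic.exists_basis_eq_root_pow x₀Poly_natDegree adjoinRootLinearEquiv
  refine ⟨b, ?_, ?_⟩
  · rw [hb, Fin.val_zero, pow_zero, adjoinRootLinearEquiv_apply, map_one]
  · rw [hb, Fin.val_one, pow_one, adjoinRootLinearEquiv_apply, adjoinRootToQuot_root]

end
end

section
/- Every finite subgroup G of the orthogonal group O(2) = Matrix.orthogonalGroup (Fin 2) ℝ is either cyclic or isomorphic as a group to the dihedral group DihedralGroup m for some m ≥ 1. -/
/-!
STATEMENT 9: Every finite subgroup of `O(2)` is cyclic or isomorphic to a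
dihedral group `DihedralGroup m` with `m ≥ 1`.
-/


open Matrix

namespace O2Aux

variable {A B : Matrix (Fin 2) (Fin 2) ℝ}

theorem entries (hA : A ∈ Matrix.orthogonalGroup (Fin 2) ℝ) :
    A 0 0 * A 0 0 + A 0 1 * A 0 1 = 1 ∧ A 1 0 * A 1 0 + A 1 1 * A 1 1 = 1 ∧
    A 0 0 * A 1 0 + A 0 1 * A 1 1 = 0 := by
  have h := hA.2
  rw [show (star A : Matrix (Fin 2) (Fin 2) ℝ) = Aᵀ from rfl] at h
  have h00 := congrFun (congrFun h 0) 0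
  have h11 := congrFun (congrFun h 1) 1
  have h01 := congrFun (congrFun h 0) 1
  simp [Matrix.mul_apply, Fin.sum_univ_two, Matrix.one_apply] at h00 h11 h01
  exact ⟨h00, h11, h01⟩

theorem det_eq (hA : A ∈ Matrix.orthogonalGroup (Fin 2) ℝ) :
    A.det = 1 ∨ A.det = -1 := by
  have h := hA.2
  have := congr_arg Matrix.det h
  rw [Matrix.det_mul, show (star A : Matrix (Fin 2) (Fin 2) ℝ) = Aᵀ from rfl,
    Matrix.det_transpose, Matrix.det_one] at this
  rcases mul_self_eq_one_iff.mp this with h1 | h1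
  · exact Or.inl h1
  · exact Or.inr h1

theorem so_form (hA : A ∈ Matrix.orthogonalGroup (Fin 2) ℝ) (hd : A.det = 1) :
    A 1 1 = A 0 0 ∧ A 1 0 = -(A 0 1) := by
  obtain ⟨e1, e2, e3⟩ := entries hA
  rw [Matrix.det_fin_two] at hd
  constructor <;> nlinarith [sq_nonneg (A 1 1 - A 0 0), sq_nonneg (A 1 0 + A 0 1),
    sq_nonneg (A 1 1 + A 0 0), sq_nonneg (A 1 0 - A 0 1)]

theorem refl_form (hA : A ∈ Matrix.orthogonalGroup (Fin 2) ℝ) (hd : A.det = -1) :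
    A 1 1 = -(A 0 0) ∧ A 1 0 = A 0 1 := by
  obtain ⟨e1, e2, e3⟩ := entries hA
  rw [Matrix.det_fin_two] at hd
  constructor <;> nlinarith [sq_nonneg (A 1 1 - A 0 0), sq_nonneg (A 1 0 + A 0 1),
    sq_nonneg (A 1 1 + A 0 0), sq_nonneg (A 1 0 - A 0 1)]

theorem refl_sq (hA : A ∈ Matrix.orthogonalGroup (Fin 2) ℝ) (hd : A.det = -1) :
    A * A = 1 := by
  obtain ⟨e1, e2, e3⟩ := entries hA
  obtain ⟨f1, f2⟩ := refl_form hA hd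
  ext i j
  fin_cases i <;> fin_cases j <;>
    simp [Matrix.mul_apply, Fin.sum_univ_two, Matrix.one_apply, f1, f2] <;> nlinarith

theorem conj (hA : A ∈ Matrix.orthogonalGroup (Fin 2) ℝ) (hd : A.det = -1)
    (hB : B ∈ Matrix.orthogonalGroup (Fin 2) ℝ) (hd' : B.det = 1) :
    A * B * A = Bᵀ := by
  obtain ⟨e1, e2, e3⟩ := entries hA
  obtain ⟨f1, f2⟩ := refl_form hA hd
  obtain ⟨g1, g2⟩ := so_form hB hd'
  ext i j
  fin_cases i <;> fin_cases j <;>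
    simp [Matrix.mul_apply, Fin.sum_univ_two, Matrix.transpose_apply, f1, f2, g1, g2] <;>
    first
      | linear_combination (B 0 0) * e1
      | linear_combination (B 0 1) * e1
      | linear_combination (-(B 0 1)) * e1

theorem aux_cyclic {K : Type*} [Group K] [Finite K]
    (π : K →* Matrix.orthogonalGroup (Fin 2) ℝ) (hinj : Function.Injective π)
    (h : ∀ x : K, ((π x : Matrix.orthogonalGroup (Fin 2) ℝ) : Matrix (Fin 2) (Fin 2) ℝ).det = 1) :
    IsCyclic K := by
  set mat : K → Matrix (Fin 2) (Fin 2) ℝ := fun x => ((π x : _) : Matrix (Fin 2) (Fin 2) ℝ)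
  have hso : ∀ x : K, (mat x) 1 1 = (mat x) 0 0 ∧ (mat x) 1 0 = -((mat x) 0 1) :=
    fun x => so_form (π x).2 (h x)
  have hmul : ∀ x y : K, mat (x * y) = mat x * mat y := by
    intro x y
    simp only [mat, _root_.map_mul, Submonoid.coe_mul]
  let f : K →* ℂ :=
  { toFun := fun x => (mat x 0 0 : ℂ) + (mat x 1 0 : ℂ) * Complex.I
    map_one' := by
      simp only [mat, _root_.map_one]
      norm_num [Matrix.one_apply]
    map_mul' := by
      intro x y
      have hx := hso x
      have hy := hso y
      show (mat (x * y) 0 0 : ℂ) + (mat (x * y) 1 0 : ℂ) * Complex.I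
          = ((mat x 0 0 : ℂ) + (mat x 1 0 : ℂ) * Complex.I) *
            ((mat y 0 0 : ℂ) + (mat y 1 0 : ℂ) * Complex.I)
      rw [hmul x y]
      simp only [Matrix.mul_apply, Fin.sum_univ_two]
      rw [hx.1, hx.2]
      push_cast
      ring_nf
      rw [Complex.I_sq]
      ring }
  refine isCyclic_of_subgroup_isDomain f ?_
  intro x y hxy
  simp only [f, MonoidHom.coe_mk, OneHom.coe_mk] at hxy
  have h1 : mat x 0 0 = mat y 0 0 ∧ mat x 1 0 = mat y 1 0 := by
    have hre := congr_arg Complex.re hxy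
    have him := congr_arg Complex.im hxy
    simp at hre him
    exact ⟨hre, him⟩
  apply hinj
  apply Subtype.ext
  show mat x = mat y
  ext i j
  fin_cases i <;> fin_cases j
  · exact h1.1
  · show mat x 0 1 = mat y 0 1
    have ex := (hso x).2; have ey := (hso y).2
    have h2 := h1.2
    linarith
  · exact h1.2
  · show mat x 1 1 = mat y 1 1
    rw [(hso x).1, (hso y).1]; exact h1.1

end O2Aux

theorem finite_subgroup_O2_cyclic_or_dihedral
    (G : Subgroup (Matrix.orthogonalGroup (Fin 2) ℝ)) [Finite G] :
    IsCyclic G ∨ ∃ m : ℕ, 1 ≤ m ∧ Nonempty (G ≃* DihedralGroup m) := by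
  classical
  set mat : G → Matrix (Fin 2) (Fin 2) ℝ :=
    fun x => ((x : Matrix.orthogonalGroup (Fin 2) ℝ) : Matrix (Fin 2) (Fin 2) ℝ) with hmat
  have hmem : ∀ x : G, mat x ∈ Matrix.orthogonalGroup (Fin 2) ℝ := fun x => x.1.2
  have hmatmul : ∀ x y : G, mat (x * y) = mat x * mat y := fun x y => rfl
  have hmatone : mat 1 = 1 := rfl
  have hlift : ∀ {x y : G}, mat x = mat y → x = y := fun h => Subtype.ext (Subtype.ext h)
  have hdet : ∀ x : G, (mat x).det = 1 ∨ (mat x).det = -1 := fun x => O2Aux.det_eq (hmem x)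
  by_cases hall : ∀ x : G, (mat x).det = 1
  · exact Or.inl (O2Aux.aux_cyclic G.subtype Subtype.coe_injective hall)
  right
  push_neg at hall
  obtain ⟨ρ, hρ0⟩ := hall
  have hρ' : (mat ρ).det = -1 := (hdet ρ).resolve_left hρ0
  -- the rotation subgroup
  let S : Subgroup G :=
    { carrier := {x | (mat x).det = 1}
      one_mem' := by show (mat 1).det = 1; rw [hmatone, Matrix.det_one]
      mul_mem' := by
        intro a b ha hb
        show (mat (a * b)).det = 1
        rw [hmatmul, Matrix.det_mul, ha, hb, mul_one]
      inv_mem' := by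
        intro a ha
        show (mat a⁻¹).det = 1
        rw [show mat a⁻¹ = (mat a)ᵀ from rfl, Matrix.det_transpose]
        exact ha }
  have hScyc : IsCyclic S :=
    O2Aux.aux_cyclic (G.subtype.comp S.subtype)
      (Subtype.coe_injective.comp Subtype.coe_injective) (fun x => x.2)
  obtain ⟨ζ, hζ⟩ := hScyc.exists_generator
  haveI : Nonempty S := ⟨1⟩
  set m := Nat.card S with hm
  have hm1 : 1 ≤ m := Nat.card_pos
  haveI : NeZero m := ⟨by omega⟩
  have ho : orderOf (ζ : G) = m := by
    rw [Subgroup.orderOf_coe, orderOf_eq_card_of_forall_mem_zpowers hζ]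
  have hρ2 : ρ * ρ = 1 := by
    apply hlift
    rw [hmatmul, hmatone]
    exact O2Aux.refl_sq (hmem ρ) hρ'
  have hconj : ∀ g : G, (mat g).det = 1 → ρ * g * ρ = g⁻¹ := by
    intro g hg
    apply hlift
    rw [hmatmul, hmatmul, show mat g⁻¹ = (mat g)ᵀ from rfl]
    exact O2Aux.conj (hmem ρ) hρ' (hmem g) hg
  set e : ZMod m → G := fun i => (ζ : G) ^ i.val with he
  have hedet : ∀ i : ZMod m, (mat (e i)).det = 1 := by
    intro i
    have h1 : e i = ((ζ ^ i.val : S) : G) := by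
      rw [he]; push_cast; rfl
    rw [h1]
    exact (ζ ^ i.val : S).2
  have he_add : ∀ i j : ZMod m, e (i + j) = e i * e j := by
    intro i j
    show (ζ : G) ^ (i + j).val = (ζ : G) ^ i.val * (ζ : G) ^ j.val
    rw [← pow_add, pow_eq_pow_iff_modEq, ho, ZMod.val_add]
    exact Nat.mod_modEq _ m
  have he_zero : e 0 = 1 := by
    show (ζ : G) ^ (0 : ZMod m).val = 1
    rw [ZMod.val_zero, pow_zero]
  have he_neg : ∀ i : ZMod m, e (-i) = (e i)⁻¹ := by
    intro i
    have h1 : e (-i) * e i = 1 := by rw [← he_add, neg_add_cancel, he_zero]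
    exact eq_inv_of_mul_eq_one_left h1
  have hcomm : ∀ i : ZMod m, e i * ρ = ρ * (e i)⁻¹ := by
    intro i
    have h := hconj (e i) (hedet i)
    calc e i * ρ = ρ * (ρ * e i * ρ) := by
          rw [← mul_assoc, ← mul_assoc, hρ2, one_mul]
      _ = ρ * (e i)⁻¹ := by rw [h]
  have einj : ∀ i j : ZMod m, e i = e j → i = j := by
    intro i j h
    have h2 : (ζ : G) ^ i.val = (ζ : G) ^ j.val := h
    rw [pow_eq_pow_iff_modEq, ho] at h2
    have h3 : i.val % m = j.val % m := h2
    rw [Nat.mod_eq_of_lt (ZMod.val_lt i), Nat.mod_eq_of_lt (ZMod.val_lt j)] at h3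
    exact ZMod.val_injective m h3
  have hne : ∀ i j : ZMod m, e i ≠ ρ * e j := by
    intro i j h
    have hd := congr_arg (fun g : G => (mat g).det) h
    simp only [hmatmul, Matrix.det_mul, hρ', hedet i, hedet j] at hd
    norm_num at hd
  have hez : ∀ k : ℤ, (ζ : G) ^ k = e ((k : ZMod m)) := by
    intro k
    show (ζ : G) ^ k = (ζ : G) ^ ((k : ZMod m)).val
    rw [show ((ζ : G) ^ ((k : ZMod m)).val) = (ζ : G) ^ (((k : ZMod m)).val : ℤ) from
      (zpow_natCast _ _).symm]
    rw [zpow_eq_zpow_iff_modEq, ho]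
    apply (ZMod.intCast_eq_intCast_iff _ _ _).mp
    push_cast
    simp [ZMod.natCast_val, ZMod.cast_id]
  -- the equivalence
  let F : DihedralGroup m → G := fun x =>
    match x with
    | DihedralGroup.r i => e i
    | DihedralGroup.sr i => ρ * e i
  have hFmul : ∀ x y : DihedralGroup m, F (x * y) = F x * F y := by
    rintro (i | i) (j | j)
    · show e (i + j) = e i * e j
      exact he_add i j
    · show ρ * e (j - i) = e i * (ρ * e j)
      rw [show j - i = -i + j from by ring, he_add, he_neg, ← mul_assoc, ← hcomm i, mul_assoc]
    · show ρ * e (i + j) = (ρ * e i) * e j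
      rw [he_add, mul_assoc]
    · show e (j - i) = (ρ * e i) * (ρ * e j)
      rw [show j - i = -i + j from by ring, he_add, he_neg]
      rw [show (ρ * e i) * (ρ * e j) = (ρ * e i * ρ) * e j from by
        rw [mul_assoc, mul_assoc, mul_assoc], hconj (e i) (hedet i)]
  have hFinj : Function.Injective F := by
    rintro (i | i) (j | j) h
    · exact congrArg DihedralGroup.r (einj i j h)
    · exact absurd h (hne i j)
    · exact absurd h.symm (hne j i)
    · exact congrArg DihedralGroup.sr (einj i j (mul_left_cancel h))
  have hFsurj : Function.Surjective F := by
    intro g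
    rcases hdet g with h1 | h1
    · have hgS : g ∈ S := h1
      obtain ⟨k, hk⟩ := (Subgroup.mem_zpowers_iff.mp (hζ ⟨g, hgS⟩))
      refine ⟨DihedralGroup.r ((k : ZMod m)), ?_⟩
      show e _ = g
      rw [← hez, ← SubgroupClass.coe_zpow ζ k, hk]
    · have h2 : (mat (ρ * g)).det = 1 := by
        rw [hmatmul, Matrix.det_mul, hρ', h1]; norm_num
      obtain ⟨k, hk⟩ := (Subgroup.mem_zpowers_iff.mp (hζ ⟨ρ * g, h2⟩))
      refine ⟨DihedralGroup.sr ((k : ZMod m)), ?_⟩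
      show ρ * e _ = g
      rw [← hez]
      have h3 : (ζ : G) ^ k = ρ * g := by
        rw [← SubgroupClass.coe_zpow ζ k, hk]
      rw [h3, ← mul_assoc, hρ2, one_mul]
  exact ⟨m, hm1, ⟨(MulEquiv.ofBijective (MonoidHom.mk' F hFmul) ⟨hFinj, hFsurj⟩).symm⟩⟩
end
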